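/- The discharge-form inverse Lax curve φ̃_r is strictly convex on (0,∞); that is, for all 0 < h₁ < h₂ and t ∈ (0,1), φ̃_r(t·h₁ + (1−t)·h₂) < t·φ̃_r(h₁) + (1−t)·φ̃_r(h₂). -/

import Mathlib

/-- Inverse Lax curve through the right state `(hr, vr)`. -/
noncomputable def phir (g hr vr h : ℝ) : ℝ :=
  if h ≤ hr then vr - 2 * Real.sqrt (g * hr) + 2 * Real.sqrt (g * h)
  else vr + (h - hr) * Real.sqrt (g * (h + hr) / (2 * h * hr))

/-- Discharge-form inverse Lax curve through the right state. -/
noncomputable def phirTilde (g hr vr h : ℝ) : ℝ := h * phir g hr vr h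

/-!
With `c = vr - 2 √(g hr)`, the curve is `h (c + 2 √(g h))` on `(0, hr]` and
`vr h + √(g / (2 hr)) (h - hr) √(h (h + hr))` on `[hr, ∞)`. Both branches have slope
`vr + √(g hr)` at `hr`, so `phirTilde` is differentiable on `(0, ∞)`, and its derivative is
strictly increasing there: on the rarefaction branch it is `c + 3 √(g h)`, and on the shock branch
its own derivative is `√(g / (2 hr)) (8h³ + 12h²hr + 3h hr² + hr³) / (4 (h (h + hr))^(3/2)) > 0`.
-/

open Real Set

theorem hasDerivAt_of_eqOn_Iic_of_eqOn_Ici {f f₁ f₂ : ℝ → ℝ} {c d : ℝ}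
    (h₁ : EqOn f f₁ (Iic c)) (h₂ : EqOn f f₂ (Ici c))
    (hd₁ : HasDerivAt f₁ d c) (hd₂ : HasDerivAt f₂ d c) : HasDerivAt f d c := by
  have hl : HasDerivWithinAt f d (Iic c) c := hd₁.hasDerivWithinAt.congr h₁ (h₁ self_mem_Iic)
  have hr : HasDerivWithinAt f d (Ici c) c := hd₂.hasDerivWithinAt.congr h₂ (h₂ self_mem_Ici)
  simpa only [Iic_union_Ici, hasDerivWithinAt_univ] using hl.union hr

theorem hasDerivAt_sqrt_mul_add {a x : ℝ} (hx : 0 < x * (x + a)) :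
    HasDerivAt (fun h => √(h * (h + a))) ((2 * x + a) / (2 * √(x * (x + a)))) x := by
  have hq : HasDerivAt (fun h => h * (h + a)) (2 * x + a) x :=
    ((hasDerivAt_id' (x := x)).mul ((hasDerivAt_id' (x := x)).add_const a)).congr_deriv (by ring)
  exact hq.sqrt hx.ne'

noncomputable def rarefactionDischarge (g hr vr h : ℝ) : ℝ :=
  h * (vr - 2 * √(g * hr) + 2 * √(g * h))

noncomputable def shockDischarge (g hr vr h : ℝ) : ℝ :=
  vr * h + √(g / (2 * hr)) * ((h - hr) * √(h * (h + hr)))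

noncomputable def rarefactionSlope (g hr vr h : ℝ) : ℝ :=
  vr - 2 * √(g * hr) + 3 * √(g * h)

noncomputable def shockSlope (g hr vr h : ℝ) : ℝ :=
  vr + √(g / (2 * hr)) * ((4 * h ^ 2 + h * hr - hr ^ 2) / (2 * √(h * (h + hr))))

noncomputable def phirTildeSlope (g hr vr h : ℝ) : ℝ :=
  if h ≤ hr then rarefactionSlope g hr vr h else shockSlope g hr vr h

section

variable {g hr : ℝ} (vr : ℝ)

theorem phirTilde_of_le {h : ℝ} (hh : h ≤ hr) :
    phirTilde g hr vr h = rarefactionDischarge g hr vr h := by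
  rw [phirTilde, phir, if_pos hh, rarefactionDischarge]

theorem phirTilde_of_ge (hg : 0 ≤ g) (hhr : 0 < hr) {h : ℝ} (hh : hr ≤ h) :
    phirTilde g hr vr h = shockDischarge g hr vr h := by
  rcases hh.eq_or_lt with rfl | hlt
  · simp [phirTilde, phir, shockDischarge, mul_comm]
  have h0 : 0 < h := hhr.trans hlt
  have key : h * √(g * (h + hr) / (2 * h * hr)) = √(g / (2 * hr)) * √(h * (h + hr)) :=
    calc h * √(g * (h + hr) / (2 * h * hr))
        = √(h ^ 2) * √(g * (h + hr) / (2 * h * hr)) := by rw [sqrt_sq h0.le]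
      _ = √(g / (2 * hr) * (h * (h + hr))) := by
          rw [← sqrt_mul (sq_nonneg h)]; congr 1; field_simp
      _ = √(g / (2 * hr)) * √(h * (h + hr)) := sqrt_mul (by positivity) _
  rw [phirTilde, phir, if_neg hlt.not_ge, shockDischarge]
  linear_combination (h - hr) * key

theorem hasDerivAt_rarefactionDischarge (hg : 0 < g) {x : ℝ} (hx : 0 < x) :
    HasDerivAt (rarefactionDischarge g hr vr) (rarefactionSlope g hr vr x) x := by
  have hgx : 0 < g * x := mul_pos hg hx
  have hs : HasDerivAt (fun h => √(g * h)) (g / (2 * √(g * x))) x := by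
    simpa using ((hasDerivAt_id' (x := x)).const_mul g).sqrt hgx.ne'
  refine ((hasDerivAt_id' (x := x)).mul
    ((hs.const_mul 2).const_add (vr - 2 * √(g * hr)))).congr_deriv ?_
  have hsq : √(g * x) ^ 2 = g * x := sq_sqrt hgx.le
  have : √(g * x) ≠ 0 := (sqrt_pos.2 hgx).ne'
  rw [rarefactionSlope]
  field_simp
  linear_combination -hsq

theorem hasDerivAt_shockDischarge (hhr : 0 < hr) {x : ℝ} (hx : 0 < x) :
    HasDerivAt (shockDischarge g hr vr) (shockSlope g hr vr x) x := by
  have hq : 0 < x * (x + hr) := by positivity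
  refine (((hasDerivAt_id' (x := x)).const_mul vr).add
    ((((hasDerivAt_id' (x := x)).sub_const hr).mul (hasDerivAt_sqrt_mul_add hq)).const_mul
      √(g / (2 * hr)))).congr_deriv ?_
  have hsq : √(x * (x + hr)) ^ 2 = x * (x + hr) := sq_sqrt hq.le
  have : √(x * (x + hr)) ≠ 0 := (sqrt_pos.2 hq).ne'
  rw [shockSlope]
  field_simp
  linear_combination 2 * √(g / (2 * hr)) * hsq

theorem shockSlope_self (hg : 0 ≤ g) (hhr : 0 < hr) :
    shockSlope g hr vr hr = rarefactionSlope g hr vr hr := by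
  have hq : 0 < hr * (hr + hr) := by positivity
  have hsq : √(hr * (hr + hr)) ^ 2 = hr * (hr + hr) := sq_sqrt hq.le
  have hN : (4 * hr ^ 2 + hr * hr - hr ^ 2) / (2 * √(hr * (hr + hr))) = √(hr * (hr + hr)) := by
    rw [div_eq_iff (by positivity)]
    linear_combination -2 * hsq
  rw [shockSlope, rarefactionSlope, hN, ← sqrt_mul (by positivity)]
  have hk : g / (2 * hr) * (hr * (hr + hr)) = g * hr := by field_simp; ring
  rw [hk]
  ring

theorem hasDerivAt_phirTilde (hg : 0 < g) (hhr : 0 < hr) {x : ℝ} (hx : 0 < x) :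
    HasDerivAt (phirTilde g hr vr) (phirTildeSlope g hr vr x) x := by
  rcases lt_trichotomy x hr with hlt | rfl | hgt
  · rw [phirTildeSlope, if_pos hlt.le]
    exact (hasDerivAt_rarefactionDischarge vr hg hx).congr_of_eventuallyEq
      (Filter.eventually_of_mem (Iio_mem_nhds hlt) fun h hh => phirTilde_of_le vr hh.le)
  · rw [phirTildeSlope, if_pos le_rfl]
    refine hasDerivAt_of_eqOn_Iic_of_eqOn_Ici (fun h hh => phirTilde_of_le vr hh)
      (fun h hh => phirTilde_of_ge vr hg.le hx hh) (hasDerivAt_rarefactionDischarge vr hg hx) ?_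
    rw [← shockSlope_self vr hg.le hx]
    exact hasDerivAt_shockDischarge vr hx hx
  · rw [phirTildeSlope, if_neg hgt.not_ge]
    exact (hasDerivAt_shockDischarge vr hhr hx).congr_of_eventuallyEq
      (Filter.eventually_of_mem (Ioi_mem_nhds hgt) fun h hh => phirTilde_of_ge vr hg.le hhr hh.le)

theorem strictMonoOn_rarefactionSlope (hg : 0 < g) :
    StrictMonoOn (rarefactionSlope g hr vr) (Ici 0) := by
  intro a ha b _ hab
  have : √(g * a) < √(g * b) :=
    sqrt_lt_sqrt (mul_nonneg hg.le ha) (mul_lt_mul_of_pos_left hab hg)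
  simp only [rarefactionSlope]
  linarith

theorem hasDerivAt_shockSlope (hhr : 0 < hr) {x : ℝ} (hx : 0 < x) :
    HasDerivAt (shockSlope g hr vr)
      (√(g / (2 * hr)) * ((8 * x ^ 3 + 12 * x ^ 2 * hr + 3 * x * hr ^ 2 + hr ^ 3) /
        (4 * √(x * (x + hr)) ^ 3))) x := by
  have hq : 0 < x * (x + hr) := by positivity
  have hN : HasDerivAt (fun h => 4 * h ^ 2 + h * hr - hr ^ 2) (8 * x + hr) x :=
    ((((hasDerivAt_pow 2 x).const_mul 4).add ((hasDerivAt_id' (x := x)).mul_const hr)).sub_const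
      (hr ^ 2)).congr_deriv (by simp; ring)
  have hs : 0 < √(x * (x + hr)) := sqrt_pos.2 hq
  refine (((hN.div ((hasDerivAt_sqrt_mul_add hq).const_mul 2) (by positivity)).const_mul
    √(g / (2 * hr))).const_add vr).congr_deriv ?_
  have hsq : √(x * (x + hr)) ^ 2 = x * (x + hr) := sq_sqrt hq.le
  congr 1
  field_simp
  linear_combination (64 * x + 8 * hr) * hsq

theorem strictMonoOn_shockSlope (hg : 0 < g) (hhr : 0 < hr) :
    StrictMonoOn (shockSlope g hr vr) (Ioi 0) := by
  refine strictMonoOn_of_deriv_pos (convex_Ioi 0)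
    (fun x hx => (hasDerivAt_shockSlope vr hhr hx).continuousAt.continuousWithinAt) fun x hx => ?_
  rw [interior_Ioi, mem_Ioi] at hx
  rw [(hasDerivAt_shockSlope vr hhr hx).deriv]
  positivity

theorem strictMonoOn_phirTildeSlope (hg : 0 < g) (hhr : 0 < hr) :
    StrictMonoOn (phirTildeSlope g hr vr) (Ioi 0) := by
  rw [← Ioc_union_Ici_eq_Ioi hhr]
  refine StrictMonoOn.union ?_ ?_ (isGreatest_Ioc hhr) isLeast_Ici
  · refine ((strictMonoOn_rarefactionSlope vr hg).mono ?_).congr fun x hx => (if_pos hx.2).symm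
    exact Ioc_subset_Ioi_self.trans Ioi_subset_Ici_self
  · refine ((strictMonoOn_shockSlope vr hg hhr).mono (Ici_subset_Ioi.2 hhr)).congr fun x hx => ?_
    rcases (mem_Ici.1 hx).eq_or_lt with rfl | hlt
    · rw [phirTildeSlope, if_pos le_rfl, shockSlope_self vr hg.le hhr]
    · rw [phirTildeSlope, if_neg hlt.not_ge]

theorem strictConvexOn_phirTilde (hg : 0 < g) (hhr : 0 < hr) :
    StrictConvexOn ℝ (Ioi 0) (phirTilde g hr vr) := by
  have hd := fun x (hx : x ∈ Ioi (0 : ℝ)) => hasDerivAt_phirTilde vr hg hhr hx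
  refine StrictMonoOn.strictConvexOn_of_deriv (convex_Ioi 0)
    (fun x hx => (hd x hx).continuousAt.continuousWithinAt) ?_
  rw [interior_Ioi]
  exact (strictMonoOn_phirTildeSlope vr hg hhr).congr fun x hx => (hd x hx).deriv.symm

end

/-- The discharge-form inverse Lax curve is strictly convex on `(0, ∞)`. -/
theorem phirTilde_strictConvex (g hr vr : ℝ) (hg : 0 < g) (hhr : 0 < hr) :
    ∀ h₁ h₂ t : ℝ, 0 < h₁ → h₁ < h₂ → 0 < t → t < 1 →
      phirTilde g hr vr (t * h₁ + (1 - t) * h₂) <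
        t * phirTilde g hr vr h₁ + (1 - t) * phirTilde g hr vr h₂ := by
  intro h₁ h₂ t h₁_pos h₁₂ ht₀ ht₁
  simpa only [smul_eq_mul] using (strictConvexOn_phirTilde vr hg hhr).2 h₁_pos
    (h₁_pos.trans h₁₂) h₁₂.ne ht₀ (sub_pos.2 ht₁) (add_sub_cancel t 1)
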